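/- In the ring of formal power series ℚ[[x,y]] in two variables, one has (1−x³)·(1−x²)²·(1−x−yx)²·(Σ_{n,k≥0} dsv(n,k)·xⁿ·y^k) = x⁵·y³·(1−x)². Equivalently, (1−x³)·(1+x)²·(1−x−yx)²·(Σ_{n,k≥0} dsv(n,k)·xⁿ·y^k) = x⁵·y³. -/

import Mathlib

/-- The indices (0-based) of symmetric valleys of a list of naturals. -/
def symValleyIdx (L : List ℕ) : Finset ℕ :=
  (Finset.range L.length).filter (fun i =>
    i + 2 < L.length ∧ L.getD i 0 > L.getD (i+1) 0 ∧ L.getD i 0 = L.getD (i+2) 0)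

/-- `dsv π`: the sum of the depths of the symmetric valleys of `π`. -/
def dsvL (L : List ℕ) : ℕ := ∑ i ∈ symValleyIdx L, (L.getD i 0 - L.getD (i+1) 0)

/-- `dsv(n,k)`: the total sum of depths of symmetric valleys over all compositions of `n`
with exactly `k` parts. -/
def dsvNK (n k : ℕ) : ℕ :=
  ∑ c ∈ (Finset.univ : Finset (Composition n)).filter (fun c => c.length = k),
    dsvL c.blocks

/-- Variables: `X 0 = x`, `X 1 = y`. -/
noncomputable abbrev Xv : Fin 2 → MvPowerSeries (Fin 2) ℚ := MvPowerSeries.X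

/-- `Σ_{n,k≥0} dsv(n,k)·xⁿ·y^k ∈ ℚ[[x,y]]`. -/
def dsvSeries : MvPowerSeries (Fin 2) ℚ := fun m => (dsvNK (m 0) (m 1) : ℚ)

/-!
Weight a list `L` of positive integers by `x^(sum L) y^(length L)`. Cutting a list into a prefix
and a suffix is then multiplicative: the Cauchy product of functions on lists becomes the product
of their series. As `dsv π` sums, over the positions of `π`, the valley depth of the three parts
starting there, the series of `dsv` is `C · V · C`, where `C = (1 - x) / (1 - x - xy)` counts
compositions (a composition is empty or a part followed by a composition) and
`V = x⁵y³ / ((1 - x³)(1 - x²)²)` counts single valleys `(b + d, b, b + d)` with weight `d`.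
-/

open Finset MvPowerSeries

variable {R : Type*}

lemma eq_single_zero_add_single_one_iff {m : Fin 2 →₀ ℕ} {a b : ℕ} :
    m = Finsupp.single 0 a + Finsupp.single 1 b ↔ m 0 = a ∧ m 1 = b := by
  refine ⟨by rintro rfl; simp, fun ⟨h0, h1⟩ => ?_⟩
  ext i
  fin_cases i <;> simp [h0, h1]

noncomputable def listWeight (L : List ℕ) : Fin 2 →₀ ℕ :=
  Finsupp.single 0 L.sum + Finsupp.single 1 L.length

lemma listWeight_append (L M : List ℕ) : listWeight (L ++ M) = listWeight L + listWeight M := by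
  simp only [listWeight, List.sum_append, List.length_append, Finsupp.single_add]
  abel

lemma listWeight_eq_iff {L : List ℕ} {m : Fin 2 →₀ ℕ} :
    listWeight L = m ↔ L.sum = m 0 ∧ L.length = m 1 := by
  rw [eq_comm, listWeight, eq_single_zero_add_single_one_iff, eq_comm, eq_comm (a := m 1)]

def posLists (m : Fin 2 →₀ ℕ) : Finset (List ℕ) :=
  ((univ : Finset (Composition (m 0))).filter (fun c => c.length = m 1)).map
    ⟨Composition.blocks, fun _ _ => Composition.ext⟩

lemma mem_posLists {m : Fin 2 →₀ ℕ} {L : List ℕ} :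
    L ∈ posLists m ↔ (∀ x ∈ L, 0 < x) ∧ listWeight L = m := by
  rw [listWeight_eq_iff]
  simp only [posLists, mem_map, mem_filter, mem_univ, true_and]
  constructor
  · rintro ⟨c, hc, rfl⟩
    exact ⟨fun _ => c.blocks_pos, c.blocks_sum, hc⟩
  · rintro ⟨hpos, hsum, hlen⟩
    exact ⟨⟨L, hpos _, hsum⟩, hlen, rfl⟩

section ListSeries

variable [CommSemiring R]

def listSeries (f : List ℕ → R) : MvPowerSeries (Fin 2) R :=
  fun m => ∑ L ∈ posLists m, f L

lemma coeff_listSeries (f : List ℕ → R) (m : Fin 2 →₀ ℕ) :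
    coeff m (listSeries f) = ∑ L ∈ posLists m, f L := rfl

def concatConv (f g : List ℕ → R) (L : List ℕ) : R :=
  ∑ i ∈ range (L.length + 1), f (L.take i) * g (L.drop i)

lemma listSeries_concatConv (f g : List ℕ → R) :
    listSeries (concatConv f g) = listSeries f * listSeries g := by
  ext m
  rw [coeff_mul]
  simp only [coeff_listSeries, concatConv, sum_mul_sum, ← sum_product', sum_sigma']
  refine sum_nbij' (fun p => ⟨(listWeight (p.1.take p.2), listWeight (p.1.drop p.2)),
      (p.1.take p.2, p.1.drop p.2)⟩) (fun q => ⟨q.2.1 ++ q.2.2, q.2.1.length⟩) ?_ ?_ ?_ ?_ ?_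
  · rintro ⟨L, i⟩ h
    simp only [mem_sigma, mem_posLists, mem_range, mem_product,
      HasAntidiagonal.mem_antidiagonal, and_true] at h ⊢
    refine ⟨by rw [← listWeight_append, List.take_append_drop, h.1.2],
      fun x hx => h.1.1 x (List.mem_of_mem_take hx), fun x hx => h.1.1 x (List.mem_of_mem_drop hx)⟩
  · rintro ⟨⟨p, q⟩, L, M⟩ h
    simp only [mem_sigma, mem_posLists, mem_range, mem_product,
      HasAntidiagonal.mem_antidiagonal] at h ⊢
    refine ⟨⟨fun x hx => ?_, by rw [listWeight_append, h.2.1.2, h.2.2.2, h.1]⟩, by simp⟩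
    rcases List.mem_append.mp hx with hx | hx
    exacts [h.2.1.1 x hx, h.2.2.1 x hx]
  · rintro ⟨L, i⟩ h
    simp only [mem_sigma, mem_range] at h
    simp [List.length_take, Nat.min_eq_left (Nat.lt_succ_iff.mp h.2)]
  · rintro ⟨⟨p, q⟩, L, M⟩ h
    simp only [mem_sigma, mem_posLists, mem_product] at h
    simp [h.2.1.2, h.2.2.2]
  · intro _ _
    rfl

lemma listSeries_add (f g : List ℕ → R) :
    listSeries (f + g) = listSeries f + listSeries g := by
  ext m
  simp only [coeff_listSeries, Pi.add_apply, sum_add_distrib, map_add]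

lemma listSeries_ite_eq_nil : listSeries (fun L => if L = [] then (1 : R) else 0) = 1 := by
  ext m
  rw [coeff_listSeries, sum_ite_eq', coeff_one]
  refine if_congr ?_ rfl rfl
  simp [mem_posLists, listWeight, eq_comm]

lemma concatConv_one_eq_take {k : ℕ} {f : List ℕ → R} (hf : ∀ L, L.length ≠ k → f L = 0)
    (L : List ℕ) : concatConv f 1 L = f (L.take k) := by
  simp only [concatConv, Pi.one_apply, mul_one]
  refine sum_eq_single k (fun i hi hik => hf _ ?_) fun hk => ?_
  · rw [List.length_take, Nat.min_eq_left (Nat.lt_succ_iff.mp (mem_range.mp hi))]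
    exact hik
  · rw [mem_range, not_lt] at hk
    rw [List.take_of_length_le (by omega)]
    exact hf L (by omega)

end ListSeries

section XSeries

variable [CommSemiring R]

/-- `xSeries k a` is `y^k · Σ_n a(n) xⁿ`. -/
def xSeries (k : ℕ) (a : ℕ → R) : MvPowerSeries (Fin 2) R :=
  fun m => if m 1 = k then a (m 0) else 0

lemma coeff_xSeries (k : ℕ) (a : ℕ → R) (m : Fin 2 →₀ ℕ) :
    coeff m (xSeries k a) = if m 1 = k then a (m 0) else 0 := rfl

lemma X_zero_pow_mul_xSeries (j k : ℕ) (a : ℕ → R) :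
    X 0 ^ j * xSeries k a = xSeries k (fun n => if j ≤ n then a (n - j) else 0) := by
  ext m
  rw [X_pow_eq, coeff_monomial_mul]
  simp only [Finsupp.single_le_iff, coeff_xSeries, one_mul, Finsupp.tsub_apply,
    Finsupp.single_apply]
  split_ifs <;> simp_all

lemma xSeries_ite_eq (j k : ℕ) :
    xSeries k (fun n => if n = j then (1 : R) else 0) = X 0 ^ j * X 1 ^ k := by
  ext m
  rw [X_pow_eq, X_pow_eq, monomial_mul_monomial, one_mul, coeff_monomial, coeff_xSeries]
  simp only [eq_single_zero_add_single_one_iff]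
  split_ifs <;> tauto

end XSeries

section XSeriesRing

variable [CommRing R]

lemma xSeries_sub (k : ℕ) (a b : ℕ → R) : xSeries k (a - b) = xSeries k a - xSeries k b := by
  ext m
  simp only [coeff_xSeries, map_sub, Pi.sub_apply]
  split_ifs <;> simp

lemma one_sub_X_zero_pow_mul_xSeries (j k : ℕ) (a : ℕ → R) :
    (1 - X 0 ^ j) * xSeries k a =
      xSeries k (fun n => a n - if j ≤ n then a (n - j) else 0) := by
  rw [sub_mul, one_mul, X_zero_pow_mul_xSeries, ← xSeries_sub]
  rfl

lemma one_sub_X_zero_pow_mul_xSeries_of_rec {j : ℕ} (k : ℕ) {a b : ℕ → R}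
    (h_lt : ∀ n < j, a n = 0) (h_rec : ∀ n, a (n + j) = a n + b n) :
    (1 - X 0 ^ j) * xSeries k a = X 0 ^ j * xSeries k b := by
  rw [one_sub_X_zero_pow_mul_xSeries, X_zero_pow_mul_xSeries]
  congr 1
  funext n
  split_ifs with h
  · obtain ⟨n, rfl⟩ := Nat.exists_eq_add_of_le' h
    rw [h_rec, Nat.add_sub_cancel]
    ring
  · rw [h_lt n (by omega), sub_zero]

end XSeriesRing

def valleyDepth : List ℕ → ℕ
  | [a, b, c] => if b < a ∧ a = c then a - b else 0
  | _ => 0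

lemma valleyDepth_of_length_ne {L : List ℕ} (h : L.length ≠ 3) : valleyDepth L = 0 := by
  rcases L with _ | ⟨a, _ | ⟨b, _ | ⟨c, _ | ⟨d, L⟩⟩⟩⟩ <;> simp_all [valleyDepth]

lemma exists_eq_of_valleyDepth_ne_zero {L : List ℕ} (h : valleyDepth L ≠ 0) :
    ∃ a b, L = [a, b, a] ∧ b < a := by
  rcases L with _ | ⟨a, _ | ⟨b, _ | ⟨c, _ | ⟨d, L⟩⟩⟩⟩ <;>
    simp only [valleyDepth, ne_eq, not_true_eq_false] at h
  split_ifs at h with hv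
  exacts [⟨a, b, by rw [hv.2], hv.1⟩, absurd rfl h]

/-- The symmetric valleys with sum `n` are the triples `(a, n - 2a, a)` with `2a < n < 3a`, of
depth `3a - n`. -/
def sumValleyDepth (n : ℕ) : ℕ :=
  ∑ a ∈ range (n + 1), if 2 * a < n ∧ n < 3 * a then 3 * a - n else 0

lemma sumValleyDepth_of_lt_three {n : ℕ} (hn : n < 3) : sumValleyDepth n = 0 :=
  sum_eq_zero fun a _ => if_neg (by omega)

/-- Raising the three parts of a valley by one keeps its depth; the new valleys have middle
part `1`. -/
lemma sumValleyDepth_add_three (n : ℕ) :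
    sumValleyDepth (n + 3) = sumValleyDepth n + if Even n then n / 2 else 0 := by
  rw [sumValleyDepth, sum_range_succ', if_neg (by omega), add_zero,
    show n + 3 = n + 1 + 2 by rfl, sum_range_succ, sum_range_succ, if_neg (by omega),
    if_neg (by omega), add_zero, add_zero]
  have key : ∀ a, (if 2 * (a + 1) < n + 1 + 2 ∧ n + 1 + 2 < 3 * (a + 1)
      then 3 * (a + 1) - (n + 1 + 2) else 0) =
      (if 2 * a < n ∧ n < 3 * a then 3 * a - n else 0) + if n = 2 * a ∧ 0 < a then a else 0 := by
    intro a
    split_ifs <;> omega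
  rw [sum_congr rfl fun a _ => key a, sum_add_distrib, sumValleyDepth]
  congr 1
  split_ifs with hn
  · obtain ⟨c, rfl⟩ := hn
    rw [sum_eq_single c (fun a _ ha => if_neg (by omega)) (fun h => absurd (by simp) h)]
    split_ifs <;> omega
  · exact sum_eq_zero fun a _ => if_neg fun h => hn ⟨a, by omega⟩

lemma sum_posLists_valleyDepth {m : Fin 2 →₀ ℕ} (hm : m 1 = 3) :
    ∑ L ∈ posLists m, valleyDepth L = sumValleyDepth (m 0) := by
  refine sum_bij_ne_zero (fun L _ _ => L.headD 0) ?_ ?_ ?_ ?_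
  · intro L hL hv
    obtain ⟨a, b, rfl, -⟩ := exists_eq_of_valleyDepth_ne_zero hv
    obtain ⟨-, hsum, -⟩ := mem_posLists.mp hL |>.imp_right listWeight_eq_iff.mp
    simp only [List.sum_cons, List.sum_nil] at hsum
    rw [List.headD_cons, mem_range]
    omega
  · intro L hL hv L' hL' hv' h
    obtain ⟨a, b, rfl, -⟩ := exists_eq_of_valleyDepth_ne_zero hv
    obtain ⟨a', b', rfl, -⟩ := exists_eq_of_valleyDepth_ne_zero hv'
    obtain ⟨-, hsum, -⟩ := mem_posLists.mp hL |>.imp_right listWeight_eq_iff.mp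
    obtain ⟨-, hsum', -⟩ := mem_posLists.mp hL' |>.imp_right listWeight_eq_iff.mp
    rw [List.headD_cons, List.headD_cons] at h
    subst h
    simp only [List.sum_cons, List.sum_nil] at hsum hsum'
    rw [show b = b' by omega]
  · intro a _ hv
    have hc : 2 * a < m 0 ∧ m 0 < 3 * a := by
      by_contra hc
      exact hv (if_neg hc)
    refine ⟨[a, m 0 - 2 * a, a], ?_, ?_, rfl⟩
    · rw [mem_posLists, listWeight_eq_iff]
      refine ⟨fun x hx => ?_, ?_, by simp [hm]⟩
      · simp only [List.mem_cons, List.not_mem_nil, or_false] at hx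
        omega
      · simp only [List.sum_cons, List.sum_nil]
        omega
    · rw [valleyDepth, if_pos ⟨by omega, rfl⟩]
      omega
  · intro L hL hv
    obtain ⟨a, b, rfl, hba⟩ := exists_eq_of_valleyDepth_ne_zero hv
    obtain ⟨hpos, hsum, -⟩ := mem_posLists.mp hL |>.imp_right listWeight_eq_iff.mp
    have hb := hpos b (by simp)
    simp only [List.sum_cons, List.sum_nil, add_zero] at hsum
    rw [List.headD_cons, if_pos (show 2 * a < m 0 ∧ m 0 < 3 * a by omega), valleyDepth,
      if_pos ⟨hba, rfl⟩]
    omega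

lemma listSeries_valleyDepth [CommSemiring R] :
    listSeries (fun L => (valleyDepth L : R)) = xSeries 3 (fun n => (sumValleyDepth n : R)) := by
  ext m
  rw [coeff_listSeries, coeff_xSeries]
  split_ifs with hm
  · rw [← Nat.cast_sum, sum_posLists_valleyDepth hm]
  · refine sum_eq_zero fun L hL => ?_
    rw [valleyDepth_of_length_ne, Nat.cast_zero]
    rw [mem_posLists, listWeight_eq_iff] at hL
    omega

lemma one_sub_X_zero_pow_mul_xSeries_sumValleyDepth [CommRing R] :
    (1 - X 0 ^ 3) * (1 - X 0 ^ 2) ^ 2 * xSeries 3 (fun n => (sumValleyDepth n : R)) =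
      X 0 ^ 5 * X 1 ^ 3 := by
  set W := xSeries 3 (fun n => (sumValleyDepth n : R))
  set H := xSeries 3 (fun n => ((if Even n then n / 2 else 0 : ℕ) : R))
  set E := xSeries 3 (fun n => if Even n then (1 : R) else 0)
  have hW : (1 - X 0 ^ 3) * W = X 0 ^ 3 * H :=
    one_sub_X_zero_pow_mul_xSeries_of_rec 3
      (fun n hn => by rw [sumValleyDepth_of_lt_three hn, Nat.cast_zero])
      (fun n => by rw [sumValleyDepth_add_three, Nat.cast_add])
  have hH : (1 - X 0 ^ 2) * H = X 0 ^ 2 * E := by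
    refine one_sub_X_zero_pow_mul_xSeries_of_rec 3
      (fun n hn => by interval_cases n <;> simp) (fun n => ?_)
    by_cases hn : Even n
    · rw [if_pos (by simpa [Nat.even_add] using hn), if_pos hn, if_pos hn]
      rw [Nat.add_div_right n two_pos, Nat.cast_succ]
    · rw [if_neg (by simpa [Nat.even_add] using hn), if_neg hn, if_neg hn]
      simp
  have hE : (1 - X 0 ^ 2) * E = X 1 ^ 3 := by
    rw [one_sub_X_zero_pow_mul_xSeries, ← one_mul (X 1 ^ 3), ← pow_zero (X 0 : MvPowerSeries _ R),
      ← xSeries_ite_eq]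
    congr 1
    funext n
    rcases n with _ | _ | n
    · simp
    · simp
    · simp [Nat.even_add]
  linear_combination (1 - X 0 ^ 2) ^ 2 * hW + X 0 ^ 3 * (1 - X 0 ^ 2) * hH + X 0 ^ 5 * hE

section CompositionSeries

variable [CommSemiring R]

lemma listSeries_ite_length_eq_one :
    listSeries (fun L => if L.length = 1 then (1 : R) else 0) =
      xSeries 1 (fun n => if 0 < n then 1 else 0) := by
  ext m
  have h_single : ∀ L ∈ posLists m, (L.length = 1 ↔ L = [m 0]) := by
    intro L hL
    rw [mem_posLists, listWeight_eq_iff] at hL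
    refine ⟨fun h => ?_, fun h => by rw [h, List.length_singleton]⟩
    obtain ⟨x, rfl⟩ := List.length_eq_one_iff.mp h
    rw [← hL.2.1, List.sum_singleton]
  rw [coeff_listSeries, coeff_xSeries, sum_congr rfl fun L hL => if_congr (h_single L hL) rfl rfl,
    sum_ite_eq']
  simp only [mem_posLists, listWeight_eq_iff, List.mem_singleton, forall_eq, List.sum_singleton,
    List.length_singleton, true_and]
  split_ifs <;> first | rfl | (exfalso; omega)

def compositionSeries : MvPowerSeries (Fin 2) R := listSeries 1

/-- A composition is empty, or a first part followed by a composition. -/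
lemma compositionSeries_eq_one_add_mul :
    compositionSeries = 1 + listSeries (fun L => if L.length = 1 then (1 : R) else 0) *
      compositionSeries := by
  rw [compositionSeries, ← listSeries_concatConv, ← listSeries_ite_eq_nil, ← listSeries_add]
  congr 1
  funext L
  rw [Pi.add_apply, concatConv_one_eq_take (fun _ h => if_neg h)]
  cases L <;> simp

end CompositionSeries

lemma one_sub_X_zero_sub_mul_compositionSeries [CommRing R] :
    (1 - X 0 - X 1 * X 0) * compositionSeries = (1 - X 0 : MvPowerSeries (Fin 2) R) := by
  have hS : (1 - X 0) * listSeries (fun L => if L.length = 1 then (1 : R) else 0) =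
      X 0 * X 1 := by
    rw [listSeries_ite_length_eq_one, ← pow_one (X 0), one_sub_X_zero_pow_mul_xSeries,
      ← pow_one (X 1), ← xSeries_ite_eq]
    congr 1
    funext n
    rcases n with _ | _ | n <;> simp
  linear_combination (1 - X 0) * compositionSeries_eq_one_add_mul (R := R) + compositionSeries * hS

lemma valleyDepth_take_drop (L : List ℕ) (i : ℕ) :
    valleyDepth ((L.drop i).take 3) =
      if i + 2 < L.length ∧ L.getD i 0 > L.getD (i + 1) 0 ∧ L.getD i 0 = L.getD (i + 2) 0
      then L.getD i 0 - L.getD (i + 1) 0 else 0 := by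
  by_cases h : i + 2 < L.length
  · rw [List.drop_eq_getElem_cons (by omega), List.drop_eq_getElem_cons (by omega),
      List.drop_eq_getElem_cons h, List.getD_eq_getElem L 0 (by omega : i < _),
      List.getD_eq_getElem L 0 (by omega : i + 1 < _), List.getD_eq_getElem L 0 h]
    simp only [List.take_succ_cons, List.take_zero, valleyDepth, h, true_and, gt_iff_lt]
  · rw [if_neg (by omega), valleyDepth_of_length_ne]
    rw [List.length_take, List.length_drop]
    omega

lemma dsvL_eq_sum_valleyDepth (L : List ℕ) :
    dsvL L = ∑ i ∈ range (L.length + 1), valleyDepth ((L.drop i).take 3) := by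
  rw [sum_range_succ, List.drop_length, List.take_nil, valleyDepth_of_length_ne (by simp),
    add_zero, dsvL, symValleyIdx, sum_filter]
  exact sum_congr rfl fun i _ => (valleyDepth_take_drop L i).symm

lemma dsvL_eq_concatConv [CommSemiring R] (L : List ℕ) :
    (dsvL L : R) = concatConv 1 (concatConv (fun M => (valleyDepth M : R)) 1) L := by
  rw [dsvL_eq_sum_valleyDepth, Nat.cast_sum, concatConv]
  refine sum_congr rfl fun i _ => ?_
  rw [Pi.one_apply, one_mul, concatConv_one_eq_take (k := 3)
    (fun M h => by rw [valleyDepth_of_length_ne h, Nat.cast_zero])]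

lemma dsvSeries_eq_mul :
    dsvSeries = compositionSeries * (listSeries (fun L => (valleyDepth L : ℚ)) *
      compositionSeries) := by
  rw [compositionSeries, ← listSeries_concatConv, ← listSeries_concatConv]
  ext m
  rw [coeff_listSeries, ← sum_congr rfl fun L _ => dsvL_eq_concatConv L]
  show (dsvNK (m 0) (m 1) : ℚ) = _
  rw [dsvNK, Nat.cast_sum, posLists, sum_map]
  rfl

/-- `(1−x³)·(1−x²)²·(1−x−yx)²·(Σ_{n,k≥0} dsv(n,k)·xⁿ·y^k) = x⁵·y³·(1−x)²` in `ℚ[[x,y]]`. -/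
theorem dsvNK_generating_function :
    (1 - (Xv 0)^3) * (1 - (Xv 0)^2)^2 * (1 - Xv 0 - Xv 1 * Xv 0)^2 * dsvSeries
    = (Xv 0)^5 * (Xv 1)^3 * (1 - Xv 0)^2 := by
  have hC := one_sub_X_zero_sub_mul_compositionSeries (R := ℚ)
  have hV := one_sub_X_zero_pow_mul_xSeries_sumValleyDepth (R := ℚ)
  rw [← listSeries_valleyDepth] at hV
  rw [dsvSeries_eq_mul]
  linear_combination ((1 - X 0 - X 1 * X 0) * compositionSeries) ^ 2 * hV +
    X 0 ^ 5 * X 1 ^ 3 * ((1 - X 0 - X 1 * X 0) * compositionSeries + (1 - X 0)) * hC
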